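/- If H is a closed normal subgroup of a topological group G such that both H and the quotient G/H are TAP, then G is TAP. -/

import Mathlib

open Filter Topology

def partProd {G : Type*} [Monoid G] (b : ℕ → G) (n : ℕ) : G :=
  ((List.range n).map b).prod

def ProdConverges {G : Type*} [Monoid G] [TopologicalSpace G] (b : ℕ → G) : Prop :=
  ∃ x : G, Tendsto (fun n => partProd b (n + 1)) atTop (𝓝 x)

def FOmegaProductiveSet {G : Type*} [Group G] [TopologicalSpace G] (a : ℕ → G) : Prop :=
  Function.Injective a ∧
    ∀ φ : ℕ → ℕ, Function.Bijective φ → ∀ z : ℕ → ℤ,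
      ProdConverges (fun n => a (φ n) ^ z n)

def TAP (G : Type*) [Group G] [TopologicalSpace G] : Prop :=
  ¬ ∃ a : ℕ → G, FOmegaProductiveSet a

/-!
An `f_ω`-productive sequence `a` in `G` tends to `1`, hence so do its images in `G ⧸ H`. Along a
subsequence these images are either injective or constant, and a constant value must be `1`.
Keeping only the even-indexed terms of that subsequence leaves infinitely many indices of `a`
unused, and a subsequence with infinitely many unused indices is again `f_ω`-productive: its
products are products of `a` along a bijection with exponent `0` at the unused indices. The
resulting set is `f_ω`-productive either in `G ⧸ H` or, since `H` is closed, in `H`.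
-/

open Function Set

section Monoid

variable {G : Type*} [Monoid G]

lemma partProd_succ (b : ℕ → G) (n : ℕ) : partProd b (n + 1) = partProd b n * b n := by
  simp [partProd, List.range_succ]

lemma partProd_map {M : Type*} [Monoid M] (f : G →* M) (b : ℕ → G) (n : ℕ) :
    partProd (fun k => f (b k)) n = f (partProd b n) := by
  simp [partProd, map_list_prod, List.map_map, comp_def]

lemma partProd_two_mul {b c : ℕ → G} (heven : ∀ k, b (2 * k) = c k)
    (hodd : ∀ k, b (2 * k + 1) = 1) (n : ℕ) : partProd b (2 * n) = partProd c n := by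
  induction n with
  | zero => rfl
  | succ n ih => rw [Nat.mul_succ, partProd_succ, partProd_succ, hodd, mul_one, heven, ih,
      partProd_succ]

variable [TopologicalSpace G]

lemma ProdConverges.of_two_mul {b c : ℕ → G} (heven : ∀ k, b (2 * k) = c k)
    (hodd : ∀ k, b (2 * k + 1) = 1) (h : ProdConverges b) : ProdConverges c := by
  obtain ⟨x, hx⟩ := h
  refine ⟨x, ?_⟩
  have hsub : Tendsto (fun n => 2 * n + 1) atTop atTop :=
    tendsto_atTop_mono (fun n => show n ≤ 2 * n + 1 by omega) tendsto_id
  refine (hx.comp hsub).congr fun n => ?_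
  rw [comp_apply, show 2 * n + 1 + 1 = 2 * (n + 1) by ring, partProd_two_mul heven hodd]

lemma ProdConverges.map {M : Type*} [Monoid M] [TopologicalSpace M] (f : G →* M)
    (hf : Continuous f) {b : ℕ → G} (h : ProdConverges b) :
    ProdConverges (fun n => f (b n)) := by
  obtain ⟨x, hx⟩ := h
  exact ⟨f x, by simpa only [partProd_map, comp_def] using (hf.tendsto x).comp hx⟩

end Monoid

section Group

variable {G : Type*} [Group G] [TopologicalSpace G]

lemma ProdConverges.tendsto_one [IsTopologicalGroup G] {b : ℕ → G} (h : ProdConverges b) :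
    Tendsto b atTop (𝓝 1) := by
  obtain ⟨x, hx⟩ := h
  have hquot := hx.inv.mul (hx.comp (tendsto_add_atTop_nat 1))
  rw [inv_mul_cancel] at hquot
  refine (tendsto_add_atTop_iff_nat 1).mp (hquot.congr fun n => ?_)
  simp only [comp_apply, partProd_succ b (n + 1), inv_mul_cancel_left]

lemma ProdConverges.of_coe {H : Subgroup G} (hH : IsClosed (H : Set G)) {b : ℕ → H}
    (h : ProdConverges (fun n => (b n : G))) : ProdConverges b := by
  obtain ⟨x, hx⟩ := h
  have hcoe : ∀ n, partProd (fun k => (b k : G)) n = partProd b n :=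
    partProd_map H.subtype b
  have hxH : x ∈ H := hH.mem_of_tendsto hx (Eventually.of_forall fun n => by
    rw [hcoe]; exact (partProd b (n + 1)).2)
  refine ⟨⟨x, hxH⟩, ?_⟩
  rw [IsEmbedding.subtypeVal.tendsto_nhds_iff]
  simpa only [comp_def, hcoe] using hx

end Group

lemma exists_injective_comp_injective_or_const {β : Type*} (f : ℕ → β) :
    ∃ t : ℕ → ℕ, Injective t ∧ (Injective (f ∘ t) ∨ ∃ c, ∀ n, f (t n) = c) := by
  by_cases hf : (range f).Infinite
  · refine ⟨rangeSplitting f ∘ hf.natEmbedding _, (rangeSplitting_injective f).comp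
      (hf.natEmbedding _).injective, Or.inl fun m n hmn => ?_⟩
    simp only [comp_apply, apply_rangeSplitting] at hmn
    exact (hf.natEmbedding _).injective (Subtype.ext hmn)
  · have : Finite (range f) := (not_infinite.mp hf).to_subtype
    obtain ⟨c, hc⟩ := Finite.exists_infinite_fiber (rangeFactorization f)
    let e := Infinite.natEmbedding (rangeFactorization f ⁻¹' {c})
    exact ⟨fun n => (e n : ℕ), Subtype.val_injective.comp e.injective,
      Or.inr ⟨c, fun n => congrArg Subtype.val (e n).2⟩⟩

lemma infinite_compl_range_comp_two_mul {t : ℕ → ℕ} (ht : Injective t) :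
    (range fun n => t (2 * n))ᶜ.Infinite := by
  refine infinite_of_injective_forall_mem (f := fun n => t (2 * n + 1)) ?_ ?_
  · intro m n hmn
    have := ht hmn
    omega
  · rintro n ⟨m, hm⟩
    have := ht hm
    omega

namespace FOmegaProductiveSet

variable {G : Type*} [Group G] [TopologicalSpace G] {a : ℕ → G}

lemma tendsto_one [IsTopologicalGroup G] (ha : FOmegaProductiveSet a) :
    Tendsto a atTop (𝓝 1) := by
  simpa using (ha.2 id bijective_id fun _ => 1).tendsto_one

/-- `ψ` interleaves `range σ` (even positions) with its complement (odd positions), and the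
exponents `w` vanish at the odd positions. -/
lemma prodConverges_comp (ha : FOmegaProductiveSet a) {σ : ℕ → ℕ} (hσ : Injective σ)
    (hc : (range σ)ᶜ.Infinite) (z : ℕ → ℤ) : ProdConverges (fun n => a (σ n) ^ z n) := by
  classical
  have := hc.to_subtype
  let e : ℕ ⊕ ℕ ≃ ℕ := ((Equiv.ofInjective σ hσ).sumCongr
    (Nat.Subtype.orderIsoOfNat _).toEquiv).trans (Equiv.Set.sumCompl (range σ))
  let ψ : ℕ → ℕ := e ∘ Equiv.natSumNatEquivNat.symm
  let w : ℕ → ℤ := Sum.elim z 0 ∘ Equiv.natSumNatEquivNat.symm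
  refine (ha.2 ψ (e.bijective.comp Equiv.natSumNatEquivNat.symm.bijective) w).of_two_mul
    (fun k => ?_) (fun k => ?_)
  · simp [ψ, w, e]
  · simp [w]

lemma comp (ha : FOmegaProductiveSet a) {σ : ℕ → ℕ} (hσ : Injective σ)
    (hc : (range σ)ᶜ.Infinite) : FOmegaProductiveSet (a ∘ σ) := by
  refine ⟨ha.1.comp hσ, fun φ hφ z => ha.prodConverges_comp (hσ.comp hφ.1) ?_ z⟩
  rwa [range_comp, hφ.2.range_eq, image_univ]

lemma map {M : Type*} [Group M] [TopologicalSpace M] (ha : FOmegaProductiveSet a) (f : G →* M)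
    (hf : Continuous f) (hinj : Injective (f ∘ a)) : FOmegaProductiveSet (f ∘ a) :=
  ⟨hinj, fun φ hφ z => by simpa only [comp_apply, map_zpow] using (ha.2 φ hφ z).map f hf⟩

lemma codRestrict {H : Subgroup G} (hH : IsClosed (H : Set G)) (ha : FOmegaProductiveSet a)
    (haH : ∀ n, a n ∈ H) : FOmegaProductiveSet (fun n => (⟨a n, haH n⟩ : H)) :=
  ⟨fun m n hmn => ha.1 (congrArg Subtype.val hmn), fun φ hφ z =>
    ProdConverges.of_coe hH (by simpa only [Subgroup.coe_zpow] using ha.2 φ hφ z)⟩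

end FOmegaProductiveSet

/-- If `H` is a closed normal subgroup of a topological group `G` such that both `H` and
the quotient `G/H` are TAP, then `G` is TAP. -/
theorem stmt_16 {G : Type*} [Group G] [TopologicalSpace G] [IsTopologicalGroup G]
    (H : Subgroup G) [H.Normal] (hclosed : IsClosed (H : Set G))
    (hH : TAP H) (hQ : TAP (G ⧸ H)) :
    TAP G := by
  rintro ⟨a, ha⟩
  let π := QuotientGroup.mk' H
  obtain ⟨t, ht, hsub⟩ := exists_injective_comp_injective_or_const (π ∘ a)
  have hs := ha.comp (ht.comp fun m n h => by omega : Injective fun n => t (2 * n))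
    (infinite_compl_range_comp_two_mul ht)
  rcases hsub with hinj | ⟨c, hc⟩
  · exact hQ ⟨_, hs.map π continuous_quot_mk (hinj.comp fun m n h => by omega)⟩
  · have hc1 : c = 1 := by
      have hlim : Tendsto (fun n => (π ∘ a) (t n)) atTop (𝓝 1) :=
        ((continuous_quot_mk.tendsto 1).comp ha.tendsto_one).comp ht.nat_tendsto_atTop
      simp only [hc] at hlim
      exact tendsto_nhds_unique tendsto_const_nhds hlim
    have haH : ∀ n, a (t (2 * n)) ∈ H := fun n =>
      (QuotientGroup.eq_one_iff _).mp (hc1 ▸ hc (2 * n))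
    exact hH ⟨_, hs.codRestrict hclosed haH⟩
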